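/- The directional-forgetting decomposition of an information matrix exists: given a symmetric positive definite matrix R ∈ ℝⁿˣⁿ and a nonzero vector φ ∈ ℝⁿ, R can be written as R = R₁ + R₂ where R₂ := (Rφ)(Rφ)ᵀ/(φᵀRφ) is positive semidefinite of rank 1 satisfying R₂φ = Rφ, and R₁ := R − R₂ is positive semidefinite of rank at most n−1. -/

import Mathlib

open Matrix

private lemma symm_dot {n : ℕ} {R : Matrix (Fin n) (Fin n) ℝ} (h : R.IsHermitian) (x y : Fin n → ℝ) :
    x ⬝ᵥ R *ᵥ y = y ⬝ᵥ R *ᵥ x := by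
  have ht : Rᵀ = R := by rw [← conjTranspose_eq_transpose_of_trivial, h.eq]
  rw [dotProduct_mulVec, ← mulVec_transpose, dotProduct_comm, ht]

private lemma vmv_mulVec {n : ℕ} (w v x : Fin n → ℝ) : (vecMulVec w v) *ᵥ x = (v ⬝ᵥ x) • w := by
  ext i
  simp [mulVec, vecMulVec_apply, dotProduct, Finset.mul_sum, mul_assoc, mul_comm, mul_left_comm]

/-- the directional-forgetting decomposition exists. -/
theorem stmt_4 {n : ℕ} (R : Matrix (Fin n) (Fin n) ℝ) (hR : R.PosDef)
    (φ : Fin n → ℝ) (hφ : φ ≠ 0)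
    (R2 : Matrix (Fin n) (Fin n) ℝ)
    (hR2 : R2 = (φ ⬝ᵥ R *ᵥ φ)⁻¹ • vecMulVec (R *ᵥ φ) (R *ᵥ φ))
    (R1 : Matrix (Fin n) (Fin n) ℝ) (hR1 : R1 = R - R2) :
    R = R1 + R2 ∧ R2.PosSemidef ∧ R2.rank = 1 ∧ R2 *ᵥ φ = R *ᵥ φ ∧
      R1.PosSemidef ∧ R1.rank ≤ n - 1 := by
  set v := R *ᵥ φ with hv_def
  set c := φ ⬝ᵥ v with hc_def
  have hc : 0 < c := by simpa using hR.dotProduct_mulVec_pos hφ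
  have hv : v ≠ 0 := by
    intro h
    rw [hc_def, h, dotProduct_zero] at hc
    exact lt_irrefl 0 hc
  have hR2v : ∀ x, R2 *ᵥ x = (c⁻¹ * (v ⬝ᵥ x)) • v := by
    intro x
    rw [hR2, smul_mulVec, vmv_mulVec, smul_smul]
  have key : R2 *ᵥ φ = v := by
    rw [hR2v, dotProduct_comm, ← hc_def, inv_mul_cancel₀ hc.ne', one_smul]
  have hvx : ∀ x, v ⬝ᵥ x = φ ⬝ᵥ R *ᵥ x := by
    intro x
    rw [dotProduct_comm, hv_def, symm_dot hR.1]
  have hherm2 : R2.IsHermitian := by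
    show R2ᴴ = R2
    ext i j
    rw [hR2]
    simp only [conjTranspose_apply, Matrix.smul_apply, vecMulVec_apply, star_trivial, smul_eq_mul]
    ring
  have hps2 : R2.PosSemidef := by
    refine PosSemidef.of_dotProduct_mulVec_nonneg hherm2 (fun x => ?_)
    rw [hR2v, dotProduct_smul]
    have : star x ⬝ᵥ v = v ⬝ᵥ x := by simp [dotProduct_comm]
    rw [this, smul_eq_mul]
    have : c⁻¹ * (v ⬝ᵥ x) * (v ⬝ᵥ x) = c⁻¹ * ((v ⬝ᵥ x) * (v ⬝ᵥ x)) := by ring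
    rw [this]
    exact mul_nonneg (inv_nonneg.mpr hc.le) (mul_self_nonneg _)
  have hrank2 : R2.rank = 1 := by
    refine le_antisymm ?_ ?_
    · have h1 : R2 = vecMulVec (c⁻¹ • v) v := by
        rw [hR2]; ext i j; simp [vecMulVec_apply]; ring
      rw [h1, vecMulVec_eq (Fin 1)]
      calc (replicateCol (Fin 1) (c⁻¹ • v) * replicateRow (Fin 1) v).rank
          ≤ (replicateCol (Fin 1) (c⁻¹ • v)).rank := rank_mul_le_left _ _
        _ ≤ Fintype.card (Fin 1) := rank_le_card_width _
        _ = 1 := by simp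
    · rw [Matrix.rank]
      have hmem : v ∈ LinearMap.range R2.mulVecLin := ⟨φ, by simpa using key⟩
      exact Submodule.one_le_finrank_iff.mpr ((Submodule.ne_bot_iff _).mpr ⟨v, hmem, hv⟩)
  have hherm1 : R1.IsHermitian := by
    rw [hR1]; exact hR.1.sub hherm2
  have hps1 : R1.PosSemidef := by
    refine PosSemidef.of_dotProduct_mulVec_nonneg hherm1 (fun x => ?_)
    have hx : (star x : Fin n → ℝ) = x := by simp
    rw [hx, hR1, sub_mulVec, dotProduct_sub, hR2v, dotProduct_smul, smul_eq_mul]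
    set d := φ ⬝ᵥ R *ᵥ x with hd_def
    rw [hvx x, ← hd_def]
    have hxv : x ⬝ᵥ v = d := by rw [dotProduct_comm, hvx x]
    rw [hxv]
    set t := c⁻¹ * d with ht_def
    have h0 : 0 ≤ (x - t • φ) ⬝ᵥ R *ᵥ (x - t • φ) := by
      simpa using hR.posSemidef.dotProduct_mulVec_nonneg (x - t • φ)
    have hexp : (x - t • φ) ⬝ᵥ R *ᵥ (x - t • φ)
        = x ⬝ᵥ R *ᵥ x - 2 * t * d + t * t * c := by
      rw [mulVec_sub, dotProduct_sub, sub_dotProduct, sub_dotProduct,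
        mulVec_smul, dotProduct_smul, smul_dotProduct, smul_dotProduct,
        dotProduct_smul, symm_dot hR.1 x φ]
      simp only [smul_eq_mul, ← hd_def, hc_def, hv_def]
      ring
    rw [hexp] at h0
    have hct : t * c = d := by
      rw [ht_def]; field_simp
    have htd : t * t * c = t * d := by rw [mul_assoc, hct]
    linarith
  refine ⟨by rw [hR1]; exact (sub_add_cancel R R2).symm, hps2, hrank2, key, hps1, ?_⟩
  have hker : R1 *ᵥ φ = 0 := by rw [hR1, sub_mulVec, key, sub_self]
  have hmem : φ ∈ LinearMap.ker R1.mulVecLin := by simpa using hker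
  have h1 : 1 ≤ Module.finrank ℝ ↥(LinearMap.ker R1.mulVecLin) := by
    exact Submodule.one_le_finrank_iff.mpr ((Submodule.ne_bot_iff _).mpr ⟨φ, hmem, hφ⟩)
  have hrn := LinearMap.finrank_range_add_finrank_ker R1.mulVecLin
  rw [Module.finrank_pi] at hrn
  rw [Matrix.rank]
  simp only [Fintype.card_fin] at hrn
  omega
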